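/- arXiv:2306.09432 — 2 statements merged into one kernel-verified Lean document; each statement's English description precedes it below -/
import Mathlib

section
/- Let ρ and ρ̄ be two matrix product operators of size d^n × d^n with the same bond dimensions, with factors X_ℓ and X̄_ℓ respectively, such that the left unfoldings of the factors of ρ̄ are isometries (Σ_{i_ℓ,j_ℓ} (X̄_ℓ^{i_ℓ,j_ℓ})^H X̄_ℓ^{i_ℓ,j_ℓ} = I_{r_ℓ} for ℓ ≤ n−1), the factors of ρ satisfy the same canonical condition, and for each ℓ the left unfoldings satisfy ‖L(X_ℓ) − L(X̄_ℓ)‖ ≤ ε_ℓ (spectral/Frobenius norm at the last site). Then ‖ρ − ρ̄‖_F² ≤ n · Σ_{ℓ=1}^n r_ℓ ε_ℓ². -/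
open Matrix
open Fin.NatCast

/-- Left partial product of a chain of rectangular matrices. -/
noncomputable def leftProd {N : ℕ} (r : Fin (N + 1) → ℕ)
    (A : ∀ i : Fin N, Matrix (Fin (r i.castSucc)) (Fin (r i.succ)) ℂ)
    (i : Fin (N + 1)) : Matrix (Fin (r 0)) (Fin (r i)) ℂ :=
  Fin.induction (motive := fun i => Matrix (Fin (r 0)) (Fin (r i)) ℂ)
    1 (fun j ih => ih * A j) i

/-- The product `X_1^{i_1,j_1} ⋯ X_n^{i_n,j_n}` of MPO factors. -/
noncomputable def mpoEntry {n d : ℕ} (r : Fin (n + 1) → ℕ)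
    (X : ∀ ℓ : Fin n, Fin d → Fin d → Matrix (Fin (r ℓ.castSucc)) (Fin (r ℓ.succ)) ℂ)
    (i j : Fin n → Fin d) : Matrix (Fin (r 0)) (Fin (r (Fin.last n))) ℂ :=
  leftProd r (fun ℓ => X ℓ (i ℓ) (j ℓ)) (Fin.last n)

/-- The left unfolding `L(X_ℓ)` of an MPO factor: stack the blocks
`X_ℓ^{i,j}` vertically into a `d²r_{ℓ-1} × r_ℓ` matrix. -/
def leftUnfold {d r₁ r₂ : ℕ} (X : Fin d → Fin d → Matrix (Fin r₁) (Fin r₂) ℂ) :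
    Matrix (Fin d × Fin d × Fin r₁) (Fin r₂) ℂ :=
  Matrix.of fun p b => X p.1 p.2.1 p.2.2 b

/-!
Telescoping gives `ρ − ρ̄ = Σ_ℓ X_1⋯X_{ℓ-1} (X_ℓ − X̄_ℓ) X̄_{ℓ+1}⋯X̄_n` entrywise, and
Cauchy–Schwarz over the `n` terms gives the factor `n`. In the `ℓ`-th term, summing over the
indices of the left-canonical prefix `X_1⋯X_{ℓ-1}` removes it from the Frobenius norm, the bound
on `L(X_ℓ − X̄_ℓ)` costs `ε_ℓ²`, and summing over the indices of the left-canonical suffix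
`X̄_{ℓ+1}⋯X̄_n` leaves `‖1‖_F² = r_n = 1`. Summing over full index strings also counts the indices
a factor does not depend on; the resulting powers of `d²` cancel. Finally `ε_ℓ² ≤ r_ℓ ε_ℓ²`
because a left-canonical chain ending in `r_n = 1` has all bond dimensions positive.
-/

theorem Fin.sum_succ_sub_castSucc {M : Type*} [AddCommGroup M] :
    ∀ {n : ℕ} (g : Fin (n + 1) → M), ∑ i : Fin n, (g i.succ - g i.castSucc) = g (Fin.last n) - g 0
  | 0, g => by simp [Fin.last]
  | n + 1, g => by
    rw [Fin.sum_univ_castSucc]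
    simp only [Fin.succ_castSucc]
    rw [Fin.sum_succ_sub_castSucc fun i : Fin (n + 1) => g i.castSucc, Fin.castSucc_zero,
      Fin.succ_last]
    abel

namespace MPO

open Function

section Products

variable {N : ℕ} (r : Fin (N + 1) → ℕ)

noncomputable def rightProd (A : ∀ i : Fin N, Matrix (Fin (r i.castSucc)) (Fin (r i.succ)) ℂ)
    (k : Fin (N + 1)) : Matrix (Fin (r k)) (Fin (r (Fin.last N))) ℂ :=
  Fin.reverseInduction (motive := fun k => Matrix (Fin (r k)) (Fin (r (Fin.last N))) ℂ)
    1 (fun j ih => A j * ih) k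

variable (A B : ∀ i : Fin N, Matrix (Fin (r i.castSucc)) (Fin (r i.succ)) ℂ)

@[simp] lemma leftProd_zero : leftProd r A 0 = 1 := rfl

lemma leftProd_succ (k : Fin N) : leftProd r A k.succ = leftProd r A k.castSucc * A k := by
  simp [leftProd]

@[simp] lemma rightProd_last : rightProd r A (Fin.last N) = 1 := by
  simp [rightProd]

lemma rightProd_castSucc (k : Fin N) :
    rightProd r A k.castSucc = A k * rightProd r A k.succ := by
  simp [rightProd]

lemma leftProd_last_eq_mul_rightProd (k : Fin (N + 1)) :
    leftProd r A (Fin.last N) = leftProd r A k * rightProd r A k := by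
  induction k using Fin.reverseInduction with
  | last => rw [rightProd_last, Matrix.mul_one]
  | cast k ih => rw [rightProd_castSucc, ← Matrix.mul_assoc, ← leftProd_succ, ih]

variable {r A B}

lemma rightProd_congr {k : Fin (N + 1)} (h : ∀ s : Fin N, k ≤ s.castSucc → A s = B s) :
    rightProd r A k = rightProd r B k := by
  induction k using Fin.reverseInduction with
  | last => simp
  | cast k ih =>
    rw [rightProd_castSucc, rightProd_castSucc, h k le_rfl,
      ih fun s hs => h s (Fin.castSucc_lt_succ.le.trans hs)]

theorem rightProd_update {κ : Type*}
    (A : ∀ s : Fin N, κ → Matrix (Fin (r s.castSucc)) (Fin (r s.succ)) ℂ) (p : Fin N → κ)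
    {s : Fin N} {k : Fin (N + 1)} (hs : s.castSucc < k) (x : κ) :
    rightProd r (fun t => A t (update p s x t)) k = rightProd r (fun t => A t (p t)) k :=
  rightProd_congr fun t ht => by
    rw [update_of_ne (Fin.castSucc_lt_castSucc_iff.mp (hs.trans_le ht)).ne']

variable (r A B)

lemma leftProd_last_sub_leftProd_last :
    leftProd r A (Fin.last N) - leftProd r B (Fin.last N) =
      ∑ ℓ, leftProd r A ℓ.castSucc * ((A ℓ - B ℓ) * rightProd r B ℓ.succ) := by
  have hterm : ∀ ℓ : Fin N, leftProd r A ℓ.castSucc * ((A ℓ - B ℓ) * rightProd r B ℓ.succ) =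
      leftProd r A ℓ.succ * rightProd r B ℓ.succ -
        leftProd r A ℓ.castSucc * rightProd r B ℓ.castSucc := by
    intro ℓ
    rw [leftProd_succ, rightProd_castSucc, Matrix.sub_mul, Matrix.mul_sub, Matrix.mul_assoc]
  rw [Finset.sum_congr rfl fun ℓ _ => hterm ℓ,
    Fin.sum_succ_sub_castSucc fun k => leftProd r A k * rightProd r B k, rightProd_last,
    Matrix.mul_one, leftProd_zero, Matrix.one_mul, leftProd_last_eq_mul_rightProd r B 0,
    leftProd_zero, Matrix.one_mul]

end Products

section IndexSums

variable {ι κ : Type*} [Fintype ι] [DecidableEq ι] [Fintype κ]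

theorem sum_sum_update {M : Type*} [AddCommMonoid M] (s : ι) (g : (ι → κ) → M) :
    ∑ p, ∑ x, g (update p s x) = Fintype.card κ • ∑ p, g p := by
  let e : Equiv.Perm ((ι → κ) × κ) :=
    Involutive.toPerm (fun q => (update q.1 s q.2, q.1 s)) fun q => by simp
  calc ∑ p, ∑ x, g (update p s x) = ∑ q, g (e q).1 := by rw [Fintype.sum_prod_type]; rfl
    _ = ∑ q : (ι → κ) × κ, g q.1 := Equiv.sum_comp e fun q => g q.1
    _ = _ := by simp [Fintype.sum_prod_type, Finset.smul_sum]

theorem card_smul_sum_apply_eq_sum_sum {β M : Type*} [AddCommMonoid M] (s : ι)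
    (C : (ι → κ) → β) (hC : ∀ p x, C (update p s x) = C p) (F : κ → β → M) :
    Fintype.card κ • ∑ p, F (p s) (C p) = ∑ p, ∑ x, F x (C p) := by
  rw [← sum_sum_update s]
  simp [hC]

end IndexSums

theorem norm_sum_sq_le_card_mul {ι E : Type*} [SeminormedAddCommGroup E] (s : Finset ι)
    (f : ι → E) : ‖∑ i ∈ s, f i‖ ^ 2 ≤ s.card * ∑ i ∈ s, ‖f i‖ ^ 2 :=
  (pow_le_pow_left₀ (norm_nonneg _) (norm_sum_le _ _) 2).trans (sq_sum_le_card_mul_sum_sq ..)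

theorem nonempty_of_sum_conjTranspose_mul_self_eq_one {𝕜 m n κ : Type*} [RCLike 𝕜] [Fintype m]
    [Fintype κ] [DecidableEq n] [Nonempty n]
    (A : κ → Matrix m n 𝕜) (hA : ∑ x, (A x)ᴴ * A x = 1) : Nonempty m := by
  by_contra hm
  rw [not_nonempty_iff] at hm
  obtain ⟨b⟩ := ‹Nonempty n›
  simpa [Matrix.sum_apply, Matrix.mul_apply] using congrFun (congrFun hA b) b

open scoped Matrix.Norms.Frobenius

section Frobenius

variable {𝕜 : Type*} [RCLike 𝕜] {l m n κ : Type*} [Fintype l] [Fintype m] [Fintype n]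
  [Fintype κ]

theorem frobenius_norm_sq (A : Matrix m n 𝕜) : ‖A‖ ^ 2 = ∑ i, ∑ j, ‖A i j‖ ^ 2 := by
  change ‖WithLp.toLp 2 fun i => WithLp.toLp 2 fun j => A i j‖ ^ 2 = _
  simp [EuclideanSpace.norm_sq_eq, PiLp.norm_sq_eq_of_L2]

theorem ofReal_frobenius_norm_sq (A : Matrix m n 𝕜) : ((‖A‖ ^ 2 : ℝ) : 𝕜) = trace (Aᴴ * A) := by
  rw [frobenius_norm_sq, Finset.sum_comm]
  push_cast
  simp only [trace, Matrix.diag_apply, mul_apply, conjTranspose_apply, RCLike.star_def,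
    RCLike.conj_mul]

theorem frobenius_norm_one_sq [DecidableEq n] : ‖(1 : Matrix n n 𝕜)‖ ^ 2 = Fintype.card n := by
  apply RCLike.ofReal_injective (K := 𝕜)
  rw [ofReal_frobenius_norm_sq, conjTranspose_one, Matrix.one_mul, trace_one]
  simp

theorem sum_frobenius_norm_mul_sq [DecidableEq n] (A : κ → Matrix m n 𝕜)
    (hA : ∑ x, (A x)ᴴ * A x = 1) (C : Matrix n l 𝕜) : ∑ x, ‖A x * C‖ ^ 2 = ‖C‖ ^ 2 := by
  apply RCLike.ofReal_injective (K := 𝕜)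
  calc ((∑ x, ‖A x * C‖ ^ 2 : ℝ) : 𝕜) = trace (Cᴴ * (∑ x, (A x)ᴴ * A x) * C) := by
        simp only [RCLike.ofReal_sum, ofReal_frobenius_norm_sq, Matrix.mul_sum, Matrix.sum_mul,
          trace_sum, conjTranspose_mul, Matrix.mul_assoc]
    _ = _ := by rw [hA, Matrix.mul_one, ofReal_frobenius_norm_sq]

theorem frobenius_norm_mul_sq_le_of_mulVec (M : Matrix m n 𝕜) {c : ℝ}
    (hM : ∀ v : n → 𝕜, ∑ q, ‖(M *ᵥ v) q‖ ^ 2 ≤ c * ∑ b, ‖v b‖ ^ 2) (C : Matrix n l 𝕜) :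
    ‖M * C‖ ^ 2 ≤ c * ‖C‖ ^ 2 := by
  have hcol : ∀ w, (fun q => (M * C) q w) = M *ᵥ fun b => C b w := by
    intro w; ext q; simp [Matrix.mul_apply, Matrix.mulVec, dotProduct]
  rw [frobenius_norm_sq, frobenius_norm_sq, Finset.sum_comm]
  conv_rhs => rw [Finset.sum_comm, Finset.mul_sum]
  refine Finset.sum_le_sum fun w _ => ?_
  simpa only [← hcol] using hM fun b => C b w

theorem frobenius_norm_mul_sq_le_of_sum_sq_le (M : Matrix m n 𝕜) {c : ℝ}
    (hM : ∑ i, ∑ j, ‖M i j‖ ^ 2 ≤ c) (C : Matrix n l 𝕜) : ‖M * C‖ ^ 2 ≤ c * ‖C‖ ^ 2 := by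
  rw [← frobenius_norm_sq] at hM
  calc ‖M * C‖ ^ 2 ≤ (‖M‖ * ‖C‖) ^ 2 := by gcongr; exact frobenius_norm_mul M C
    _ = ‖M‖ ^ 2 * ‖C‖ ^ 2 := mul_pow ..
    _ ≤ c * ‖C‖ ^ 2 := by gcongr

theorem frobenius_norm_leftUnfold_sub_mul_sq {d r₁ r₂ : ℕ}
    (X Y : Fin d → Fin d → Matrix (Fin r₁) (Fin r₂) ℂ) (C : Matrix (Fin r₂) l ℂ) :
    ‖(leftUnfold X - leftUnfold Y) * C‖ ^ 2 =
      ∑ x : Fin d × Fin d, ‖(X x.1 x.2 - Y x.1 x.2) * C‖ ^ 2 := by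
  simp only [frobenius_norm_sq, Fintype.sum_prod_type]
  rfl

theorem sum_sum_norm_mpoEntry_sub_sq {N d : ℕ} {r : Fin (N + 1) → ℕ} (hr0 : r 0 = 1)
    (hrlast : r (Fin.last N) = 1)
    (X Y : ∀ ℓ : Fin N, Fin d → Fin d → Matrix (Fin (r ℓ.castSucc)) (Fin (r ℓ.succ)) ℂ) :
    ∑ i, ∑ j, ‖∑ a, ∑ b, mpoEntry r X i j a b - ∑ a, ∑ b, mpoEntry r Y i j a b‖ ^ 2 =
      ∑ p : Fin N → Fin d × Fin d, ‖leftProd r (fun s => X s (p s).1 (p s).2) (Fin.last N) -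
        leftProd r (fun s => Y s (p s).1 (p s).2) (Fin.last N)‖ ^ 2 := by
  have : Unique (Fin (r 0)) := by rw [hr0]; infer_instance
  have : Unique (Fin (r (Fin.last N))) := by rw [hrlast]; infer_instance
  rw [← Fintype.sum_prod_type', ← (Equiv.arrowProdEquivProdArrow _ _ _).symm.sum_comp]
  refine Finset.sum_congr rfl fun q _ => ?_
  simp [frobenius_norm_sq, mpoEntry]

end Frobenius

section Chains

variable {κ : Type*} [Fintype κ] {N : ℕ} {r : Fin (N + 1) → ℕ}

theorem pos_of_sum_conjTranspose_mul_self_eq_one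
    {A : ∀ s : Fin N, κ → Matrix (Fin (r s.castSucc)) (Fin (r s.succ)) ℂ}
    (hA : ∀ s, ∑ x, (A s x)ᴴ * A s x = 1) (hlast : 0 < r (Fin.last N)) (k : Fin (N + 1)) :
    0 < r k := by
  induction k using Fin.reverseInduction with
  | last => exact hlast
  | cast k ih =>
    have : Nonempty (Fin (r k.succ)) := Fin.pos_iff_nonempty.mp ih
    exact Fin.pos_iff_nonempty.mpr (nonempty_of_sum_conjTranspose_mul_self_eq_one _ (hA k))

theorem card_pow_mul_sum_norm_leftProd_mul_sq {W : Type*} [Fintype W]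
    (A : ∀ s : Fin N, κ → Matrix (Fin (r s.castSucc)) (Fin (r s.succ)) ℂ) (k : Fin (N + 1))
    (hA : ∀ s : Fin N, s.castSucc < k → ∑ x, (A s x)ᴴ * A s x = 1)
    (C : (Fin N → κ) → Matrix (Fin (r k)) W ℂ)
    (hC : ∀ p s x, s.castSucc < k → C (update p s x) = C p) :
    (Fintype.card κ : ℝ) ^ (k : ℕ) * ∑ p, ‖leftProd r (fun s => A s (p s)) k * C p‖ ^ 2 =
      ∑ p, ‖C p‖ ^ 2 := by
  induction k using Fin.induction with
  | zero => simp
  | succ k ih =>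
    have hAC : ∀ p s x, s.castSucc < k.castSucc →
        A k (update p s x k) * C (update p s x) = A k (p k) * C p := by
      intro p s x hs
      rw [update_of_ne (Fin.castSucc_lt_castSucc_iff.mp hs).ne',
        hC p s x (hs.trans Fin.castSucc_lt_succ)]
    calc (Fintype.card κ : ℝ) ^ (k.succ : ℕ) *
          ∑ p, ‖leftProd r (fun s => A s (p s)) k.succ * C p‖ ^ 2
        = Fintype.card κ * ((Fintype.card κ : ℝ) ^ (k.castSucc : ℕ) *
            ∑ p, ‖leftProd r (fun s => A s (p s)) k.castSucc * (A k (p k) * C p)‖ ^ 2) := by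
          simp only [leftProd_succ, Matrix.mul_assoc, Fin.val_succ, Fin.val_castSucc]
          ring
      _ = Fintype.card κ * ∑ p, ‖A k (p k) * C p‖ ^ 2 := by
          rw [ih (fun s hs => hA s (hs.trans Fin.castSucc_lt_succ)) (fun p => A k (p k) * C p) hAC]
      _ = ∑ p, ∑ x, ‖A k x * C p‖ ^ 2 := by
          rw [← nsmul_eq_mul, card_smul_sum_apply_eq_sum_sum k C
            (fun p x => hC p k x Fin.castSucc_lt_succ) fun x M => ‖A k x * M‖ ^ 2]
      _ = ∑ p, ‖C p‖ ^ 2 := by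
          simp only [sum_frobenius_norm_mul_sq _ (hA k Fin.castSucc_lt_succ)]

theorem sum_norm_rightProd_sq [Nonempty κ]
    (A : ∀ s : Fin N, κ → Matrix (Fin (r s.castSucc)) (Fin (r s.succ)) ℂ) (k : Fin (N + 1))
    (hA : ∀ s : Fin N, k ≤ s.castSucc → ∑ x, (A s x)ᴴ * A s x = 1) :
    ∑ p : Fin N → κ, ‖rightProd r (fun s => A s (p s)) k‖ ^ 2 =
      (Fintype.card κ : ℝ) ^ (k : ℕ) * r (Fin.last N) := by
  induction k using Fin.reverseInduction with
  | last => simp [frobenius_norm_one_sq]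
  | cast k ih =>
    have hR : ∀ p x, rightProd r (fun s => A s (update p k x s)) k.succ =
        rightProd r (fun s => A s (p s)) k.succ := fun p x =>
      rightProd_update A p Fin.castSucc_lt_succ x
    have hcard : (Fintype.card κ : ℝ) ≠ 0 := Nat.cast_ne_zero.mpr Fintype.card_ne_zero
    apply mul_left_cancel₀ hcard
    calc (Fintype.card κ : ℝ) * ∑ p : Fin N → κ, ‖rightProd r (fun s => A s (p s)) k.castSucc‖ ^ 2
        = ∑ p : Fin N → κ, ∑ x, ‖A k x * rightProd r (fun s => A s (p s)) k.succ‖ ^ 2 := by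
          simp only [rightProd_castSucc]
          rw [← nsmul_eq_mul, card_smul_sum_apply_eq_sum_sum k _ hR fun x M => ‖A k x * M‖ ^ 2]
      _ = ∑ p : Fin N → κ, ‖rightProd r (fun s => A s (p s)) k.succ‖ ^ 2 := by
          simp only [sum_frobenius_norm_mul_sq _ (hA k le_rfl)]
      _ = _ := by
          rw [ih fun s hs => hA s (Fin.castSucc_lt_succ.le.trans hs), Fin.val_succ,
            Fin.val_castSucc]
          ring

theorem sum_norm_leftProd_mul_sub_mul_rightProd_sq_le [Nonempty κ]
    (A B : ∀ s : Fin N, κ → Matrix (Fin (r s.castSucc)) (Fin (r s.succ)) ℂ) (ℓ : Fin N)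
    (hA : ∀ s, s < ℓ → ∑ x, (A s x)ᴴ * A s x = 1)
    (hB : ∀ s, ℓ < s → ∑ x, (B s x)ᴴ * B s x = 1) {c : ℝ}
    (hΔ : ∀ C : Matrix (Fin (r ℓ.succ)) (Fin (r (Fin.last N))) ℂ,
      ∑ x, ‖(A ℓ x - B ℓ x) * C‖ ^ 2 ≤ c * ‖C‖ ^ 2) :
    ∑ p : Fin N → κ, ‖leftProd r (fun s => A s (p s)) ℓ.castSucc *
        ((A ℓ (p ℓ) - B ℓ (p ℓ)) * rightProd r (fun s => B s (p s)) ℓ.succ)‖ ^ 2 ≤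
      c * r (Fin.last N) := by
  set R : (Fin N → κ) → Matrix (Fin (r ℓ.succ)) (Fin (r (Fin.last N))) ℂ :=
    fun p => rightProd r (fun s => B s (p s)) ℓ.succ
  have hR : ∀ p s x, s.castSucc < ℓ.succ → R (update p s x) = R p := fun p s x hs =>
    rightProd_update B p hs x
  have hprefix := card_pow_mul_sum_norm_leftProd_mul_sq A ℓ.castSucc
    (fun s hs => hA s (Fin.castSucc_lt_castSucc_iff.mp hs))
    (fun p => (A ℓ (p ℓ) - B ℓ (p ℓ)) * R p) fun p s x hs => by
      rw [update_of_ne (Fin.castSucc_lt_castSucc_iff.mp hs).ne',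
        hR p s x (hs.trans Fin.castSucc_lt_succ)]
  have hsite : (Fintype.card κ : ℝ) * ∑ p, ‖(A ℓ (p ℓ) - B ℓ (p ℓ)) * R p‖ ^ 2 ≤
      c * ∑ p, ‖R p‖ ^ 2 := by
    rw [← nsmul_eq_mul, card_smul_sum_apply_eq_sum_sum ℓ R
      (fun p x => hR p ℓ x Fin.castSucc_lt_succ) fun x M => ‖(A ℓ x - B ℓ x) * M‖ ^ 2,
      Finset.mul_sum]
    exact Finset.sum_le_sum fun p _ => hΔ (R p)
  have hsuffix := sum_norm_rightProd_sq B ℓ.succ fun s hs =>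
    hB s (Fin.castSucc_lt_castSucc_iff.mp (Fin.castSucc_lt_succ.trans_le hs))
  have hpow : (0 : ℝ) < (Fintype.card κ : ℝ) ^ (ℓ.succ : ℕ) := by positivity
  refine le_of_mul_le_mul_left ?_ hpow
  calc (Fintype.card κ : ℝ) ^ (ℓ.succ : ℕ) * _
      = (Fintype.card κ : ℝ) * ∑ p, ‖(A ℓ (p ℓ) - B ℓ (p ℓ)) * R p‖ ^ 2 := by
        rw [← hprefix, Fin.val_succ, Fin.val_castSucc, pow_succ]
        ring
    _ ≤ c * ∑ p, ‖R p‖ ^ 2 := hsite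
    _ = _ := by rw [hsuffix]; ring

theorem sum_norm_leftProd_sub_sq_le [Nonempty κ]
    (A B : ∀ s : Fin N, κ → Matrix (Fin (r s.castSucc)) (Fin (r s.succ)) ℂ)
    (hA : ∀ s, ∑ x, (A s x)ᴴ * A s x = 1)
    (hB : ∀ s : Fin N, (s : ℕ) ≠ 0 → ∑ x, (B s x)ᴴ * B s x = 1) (c : Fin N → ℝ)
    (hΔ : ∀ s (C : Matrix (Fin (r s.succ)) (Fin (r (Fin.last N))) ℂ),
      ∑ x, ‖(A s x - B s x) * C‖ ^ 2 ≤ c s * ‖C‖ ^ 2) :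
    ∑ p : Fin N → κ, ‖leftProd r (fun s => A s (p s)) (Fin.last N) -
        leftProd r (fun s => B s (p s)) (Fin.last N)‖ ^ 2 ≤
      N * ∑ s, c s * r (Fin.last N) :=
  calc _ = ∑ p : Fin N → κ, ‖∑ ℓ, leftProd r (fun s => A s (p s)) ℓ.castSucc *
          ((A ℓ (p ℓ) - B ℓ (p ℓ)) * rightProd r (fun s => B s (p s)) ℓ.succ)‖ ^ 2 := by
        simp only [leftProd_last_sub_leftProd_last]
    _ ≤ ∑ p : Fin N → κ, N * ∑ ℓ, ‖leftProd r (fun s => A s (p s)) ℓ.castSucc *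
          ((A ℓ (p ℓ) - B ℓ (p ℓ)) * rightProd r (fun s => B s (p s)) ℓ.succ)‖ ^ 2 :=
        Finset.sum_le_sum fun p _ => by
          simpa using norm_sum_sq_le_card_mul (Finset.univ : Finset (Fin N)) _
    _ = N * ∑ ℓ, ∑ p : Fin N → κ, ‖leftProd r (fun s => A s (p s)) ℓ.castSucc *
          ((A ℓ (p ℓ) - B ℓ (p ℓ)) * rightProd r (fun s => B s (p s)) ℓ.succ)‖ ^ 2 := by
        rw [← Finset.mul_sum, Finset.sum_comm]
    _ ≤ N * ∑ s, c s * r (Fin.last N) := by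
        gcongr with ℓ
        exact sum_norm_leftProd_mul_sub_mul_rightProd_sq_le A B ℓ (fun s _ => hA s)
          (fun s hs => hB s ((Nat.zero_le _).trans_lt hs).ne') (hΔ ℓ)

end Chains

end MPO

open MPO Matrix.Norms.Frobenius in
/-- if `ρ` and `ρ̄` are MPOs with the same bond dimensions whose
factors are in left-canonical form (for `ρ̄` at all sites except the last, for
`ρ` at every site, as in the set of unit-norm canonical MPOs), and the left
unfoldings satisfy `‖L(X_ℓ) − L(X̄_ℓ)‖ ≤ ε_ℓ` in spectral norm (Frobenius norm at
the last site), then `‖ρ − ρ̄‖_F² ≤ n · Σ_ℓ r_ℓ ε_ℓ²`. -/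
theorem mpo_perturbation_bound {n d : ℕ} (r : Fin (n + 2) → ℕ)
    (hr0 : r 0 = 1) (hrlast : r (Fin.last (n + 1)) = 1)
    (X Xb : ∀ ℓ : Fin (n + 1), Fin d → Fin d →
      Matrix (Fin (r ℓ.castSucc)) (Fin (r ℓ.succ)) ℂ)
    (hXcanon : ∀ ℓ : Fin (n + 1),
      ∑ i : Fin d, ∑ j : Fin d, (X ℓ i j)ᴴ * X ℓ i j = 1)
    (hXbcanon : ∀ ℓ : Fin (n + 1), ℓ ≠ Fin.last (n + 1) →
      ∑ i : Fin d, ∑ j : Fin d, (Xb ℓ i j)ᴴ * Xb ℓ i j = 1)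
    (ε : Fin (n + 1) → ℝ)
    (hspec : ∀ ℓ : Fin (n + 1), ℓ ≠ Fin.last (n + 1) →
      ∀ v : Fin (r ℓ.succ) → ℂ,
        (∑ q, ‖(leftUnfold (X ℓ) - leftUnfold (Xb ℓ)).mulVec v q‖ ^ 2) ≤
          (ε ℓ) ^ 2 * ∑ b, ‖v b‖ ^ 2)
    (hfrob : ∑ p, ∑ b,
        ‖(leftUnfold (X (Fin.last (n + 1))) - leftUnfold (Xb (Fin.last (n + 1)))) p b‖ ^ 2
        ≤ (ε (Fin.last (n + 1))) ^ 2)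
    (ρ ρb : Matrix (Fin (n + 1) → Fin d) (Fin (n + 1) → Fin d) ℂ)
    (hρ : ∀ i j, ρ i j = ∑ a, ∑ b, mpoEntry r X i j a b)
    (hρb : ∀ i j, ρb i j = ∑ a, ∑ b, mpoEntry r Xb i j a b) :
    (∑ i, ∑ j, ‖ρ i j - ρb i j‖ ^ 2) ≤
      (n + 1 : ℝ) * ∑ ℓ : Fin (n + 1), (r ℓ.succ : ℝ) * (ε ℓ) ^ 2 := by
  rcases Nat.eq_zero_or_pos d with rfl | hd
  · simp only [Finset.univ_eq_empty, Finset.sum_empty]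
    positivity
  have : Nonempty (Fin d × Fin d) := ⟨(⟨0, hd⟩, ⟨0, hd⟩)⟩
  -- `Fin.last (n + 1)` reaches the site type `Fin (n + 1)` through `ℕ` and wraps around to `0`.
  have hlast : ((Fin.last (n + 1) : ℕ) : Fin (n + 1)) = 0 := by simp
  rw [hlast] at hfrob
  simp only [hlast] at hXbcanon hspec
  have hA : ∀ ℓ, ∑ x : Fin d × Fin d, (X ℓ x.1 x.2)ᴴ * X ℓ x.1 x.2 = 1 := fun ℓ => by
    simpa only [Fintype.sum_prod_type] using hXcanon ℓ
  have hB : ∀ ℓ : Fin (n + 1), (ℓ : ℕ) ≠ 0 →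
      ∑ x : Fin d × Fin d, (Xb ℓ x.1 x.2)ᴴ * Xb ℓ x.1 x.2 = 1 := fun ℓ hℓ => by
    simpa only [Fintype.sum_prod_type] using hXbcanon ℓ (Fin.ext_iff.not.mpr hℓ)
  have hΔ : ∀ ℓ (C : Matrix (Fin (r ℓ.succ)) (Fin (r (Fin.last (n + 1)))) ℂ),
      ∑ x : Fin d × Fin d, ‖(X ℓ x.1 x.2 - Xb ℓ x.1 x.2) * C‖ ^ 2 ≤ ε ℓ ^ 2 * ‖C‖ ^ 2 := by
    intro ℓ C
    rw [← frobenius_norm_leftUnfold_sub_mul_sq]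
    rcases eq_or_ne ℓ 0 with rfl | hℓ
    · exact frobenius_norm_mul_sq_le_of_sum_sq_le _ hfrob C
    · exact frobenius_norm_mul_sq_le_of_mulVec _ (hspec ℓ hℓ) C
  have hr := pos_of_sum_conjTranspose_mul_self_eq_one hA (hrlast.symm ▸ one_pos)
  simp only [hρ, hρb, sum_sum_norm_mpoEntry_sub_sq hr0 hrlast]
  calc _ ≤ (n + 1 : ℕ) * ∑ ℓ, ε ℓ ^ 2 * r (Fin.last (n + 1)) :=
        sum_norm_leftProd_sub_sq_le _ _ hA hB (fun ℓ => ε ℓ ^ 2) hΔ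
    _ ≤ _ := by
        push_cast [hrlast]
        refine mul_le_mul_of_nonneg_left (Finset.sum_le_sum fun ℓ _ => ?_) (by positivity)
        rw [mul_one]
        exact le_mul_of_one_le_left (sq_nonneg _) (Nat.one_le_cast.mpr (hr ℓ.succ))
end

section
/- Suppose (f_{i,1},...,f_{i,K}), i = 1,...,Q are mutually independent random vectors, where each follows the multinomial distribution Multinomial(M, p_i) with probability vector p_i = (p_{i,1},...,p_{i,K}). Let a_{i,k} ≥ 0 be fixed nonnegative constants. Then for every t > 0, P(Σ_{i,k} a_{i,k}(f_{i,k}/M − p_{i,k}) > t) ≤ exp(−(Mt/(2a_max)) · min{1, a_max t / (2 Σ_{i,k} a_{i,k}² p_{i,k})}), where a_max = max_{i,k} a_{i,k}. -/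
open MeasureTheory

/-- The categorical distribution on `Fin K` with probabilities `p`. -/
noncomputable def catMeasure {K : ℕ} (p : Fin K → ℝ) : Measure (Fin K) :=
  ∑ k, ENNReal.ofReal (p k) • Measure.dirac k

/-- The law of `Q` mutually independent blocks of `M` i.i.d. categorical trials;
block `i` has category probabilities `p i`.  The associated counts are the `Q`
independent `Multinomial(M, p i)` random vectors. -/
noncomputable def multinomialFamily {Q K M : ℕ} (p : Fin Q → Fin K → ℝ) :
    Measure (Fin Q → Fin M → Fin K) :=
  Measure.pi fun i => Measure.pi fun _ : Fin M => catMeasure (p i)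

/-- The multinomial count `f_{i,k}`: the number of the `M` trials of block `i`
whose outcome is `k`. -/
def mcount {Q K M : ℕ} (ω : Fin Q → Fin M → Fin K) (i : Fin Q) (k : Fin K) : ℕ :=
  (Finset.univ.filter fun m => ω i m = k).card

/-- `a_max = max_{i,k} a_{i,k}`. -/
noncomputable def amax {Q K : ℕ} (a : Fin (Q + 1) → Fin (K + 1) → ℝ) : ℝ :=
  Finset.univ.sup' Finset.univ_nonempty
    (fun ik : Fin (Q + 1) × Fin (K + 1) => a ik.1 ik.2)

/-! Chernoff's method. `M` times the deviation is `Y - M μ`, where `Y = Σ_{i,m} a_{i,ω_{i,m}}`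
sums over the `Q M` independent trials and `μ = Σ_i μ_i`, `μ_i = Σ_k a_{i,k} p_{i,k}`. Markov's
inequality for `exp(λ Y)` bounds the tail by `exp(-λ M (t + μ))` times the product of the moment
generating functions of the trials. Since `eˣ ≤ 1 + x + x²` for `x ≤ 1`, for `0 ≤ λ ≤ 1 / a_max`
a trial of block `i` has moment generating function at most `exp(λ μ_i + λ² V_i)` with
`V_i = Σ_k a_{i,k}² p_{i,k}`, so the tail is at most `exp(M (λ² V - λ t))`, `V = Σ_i V_i`.
Taking `λ = t / (2V)` when `a_max t ≤ 2V` and `λ = 1 / a_max` otherwise gives the bound. -/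

open ProbabilityTheory Real

lemma exp_le_one_add_add_sq {x : ℝ} (hx : x ≤ 1) : exp x ≤ 1 + x + x ^ 2 := by
  rcases le_or_gt (-1) x with hx' | hx'
  · have h := Real.exp_bound (n := 2) (abs_le.2 ⟨hx', hx⟩) two_pos
    norm_num [Finset.sum_range_succ, Nat.factorial] at h
    nlinarith [abs_le.1 h, sq_abs x]
  · nlinarith [exp_le_one_iff.2 (by linarith : x ≤ 0)]

lemma mgf_sum_pi {ι : Type*} [Fintype ι] {Ω : ι → Type*} [∀ i, MeasurableSpace (Ω i)]
    {μ : ∀ i, Measure (Ω i)} [∀ i, IsProbabilityMeasure (μ i)] {X : ∀ i, Ω i → ℝ}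
    (hX : ∀ i, Measurable (X i)) (t : ℝ) :
    mgf (fun ω => ∑ i, X i (ω i)) (Measure.pi μ) t = ∏ i, mgf (X i) (μ i) t := by
  have hsum : (fun ω => ∑ i, X i (ω i)) = ∑ i, fun ω : ∀ i, Ω i => X i (ω i) := by
    ext ω; simp
  rw [hsum, (iIndepFun_pi fun i => (hX i).aemeasurable).mgf_sum
    (fun i => (hX i).comp (measurable_pi_apply i))]
  refine Finset.prod_congr rfl fun i _ => ?_
  exact integral_comp_eval (f := fun x => exp (t * X i x)) (by fun_prop)

section Categorical

variable {K : ℕ} {q : Fin K → ℝ}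

lemma isProbabilityMeasure_catMeasure (hq0 : ∀ k, 0 ≤ q k) (hq1 : ∑ k, q k = 1) :
    IsProbabilityMeasure (catMeasure q) := by
  constructor
  simp [catMeasure, ← ENNReal.ofReal_sum_of_nonneg fun k _ => hq0 k, hq1]

lemma integral_catMeasure (hq0 : ∀ k, 0 ≤ q k) (f : Fin K → ℝ) :
    ∫ k, f k ∂catMeasure q = ∑ k, q k * f k := by
  rw [catMeasure, integral_finsetSum_measure]
  · simp [integral_smul_measure, hq0]
  · exact fun k _ => (integrable_dirac enorm_lt_top).smul_measure ENNReal.ofReal_ne_top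

lemma mgf_catMeasure (hq0 : ∀ k, 0 ≤ q k) (b : Fin K → ℝ) (l : ℝ) :
    mgf b (catMeasure q) l = ∑ k, q k * exp (l * b k) :=
  integral_catMeasure hq0 _

lemma mgf_catMeasure_le (hq0 : ∀ k, 0 ≤ q k) (hq1 : ∑ k, q k = 1) {b : Fin K → ℝ} {l : ℝ}
    (hlb : ∀ k, l * b k ≤ 1) :
    mgf b (catMeasure q) l ≤ exp (l * ∑ k, b k * q k + l ^ 2 * ∑ k, b k ^ 2 * q k) := by
  calc mgf b (catMeasure q) l
      ≤ ∑ k, q k * (1 + l * b k + (l * b k) ^ 2) := by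
        rw [mgf_catMeasure hq0]
        gcongr with k
        · exact hq0 k
        · exact exp_le_one_add_add_sq (hlb k)
    _ = 1 + (l * ∑ k, b k * q k + l ^ 2 * ∑ k, b k ^ 2 * q k) := by
        have h (k) : q k * (1 + l * b k + (l * b k) ^ 2)
            = q k + l * (b k * q k) + l ^ 2 * (b k ^ 2 * q k) := by ring
        rw [Finset.sum_congr rfl fun k _ => h k, Finset.sum_add_distrib, Finset.sum_add_distrib,
          hq1, ← Finset.mul_sum, ← Finset.mul_sum, add_assoc]
    _ ≤ _ := by linarith [add_one_le_exp (l * ∑ k, b k * q k + l ^ 2 * ∑ k, b k ^ 2 * q k)]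

end Categorical

section Multinomial

variable {Q K M : ℕ}

lemma sum_mul_mcount (ω : Fin Q → Fin M → Fin K) (i : Fin Q) (b : Fin K → ℝ) :
    ∑ k, b k * (mcount ω i k : ℝ) = ∑ m, b (ω i m) := by
  rw [← Finset.sum_fiberwise' Finset.univ (ω i) b]
  refine Finset.sum_congr rfl fun k _ => ?_
  rw [Finset.sum_const, mcount, nsmul_eq_mul, mul_comm]

lemma mul_sum_sum_mcount_div_sub (ω : Fin Q → Fin M → Fin K) (a p : Fin Q → Fin K → ℝ) :
    M * ∑ i, ∑ k, a i k * ((mcount ω i k : ℝ) / M - p i k)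
      = ∑ i, ∑ m, a i (ω i m) - M * ∑ i, ∑ k, a i k * p i k := by
  rcases M.eq_zero_or_pos with rfl | hM
  · simp
  have hterm (i k) : (M : ℝ) * (a i k * ((mcount ω i k : ℝ) / M - p i k))
      = a i k * mcount ω i k - M * (a i k * p i k) := by
    field_simp
  simp only [Finset.mul_sum, hterm, Finset.sum_sub_distrib, sum_mul_mcount]

lemma isProbabilityMeasure_multinomialFamily {p : Fin Q → Fin K → ℝ} (hp0 : ∀ i k, 0 ≤ p i k)
    (hp1 : ∀ i, ∑ k, p i k = 1) : IsProbabilityMeasure (multinomialFamily (M := M) p) := by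
  have := fun i => isProbabilityMeasure_catMeasure (hp0 i) (hp1 i)
  unfold multinomialFamily
  infer_instance

lemma mgf_multinomialFamily_le {p : Fin Q → Fin K → ℝ} (hp0 : ∀ i k, 0 ≤ p i k)
    (hp1 : ∀ i, ∑ k, p i k = 1) {a : Fin Q → Fin K → ℝ} {l : ℝ} (hla : ∀ i k, l * a i k ≤ 1) :
    mgf (fun ω => ∑ i, ∑ m, a i (ω i m)) (multinomialFamily (M := M) p) l
      ≤ exp (M * (l * ∑ i, ∑ k, a i k * p i k + l ^ 2 * ∑ i, ∑ k, a i k ^ 2 * p i k)) := by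
  have := fun i => isProbabilityMeasure_catMeasure (hp0 i) (hp1 i)
  rw [multinomialFamily,
    mgf_sum_pi (X := fun i (y : Fin M → Fin K) => ∑ m, a i (y m)) (fun _ => .of_discrete) l,
    Finset.prod_congr rfl fun i _ => mgf_sum_pi (X := fun _ => a i) (fun _ => .of_discrete) l]
  calc ∏ i, ∏ _m : Fin M, mgf (a i) (catMeasure (p i)) l
      ≤ ∏ i, ∏ _m : Fin M,
          exp (l * ∑ k, a i k * p i k + l ^ 2 * ∑ k, a i k ^ 2 * p i k) := by
        gcongr with i _ m
        · exact fun _ _ => Finset.prod_nonneg fun _ _ => mgf_nonneg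
        · exact fun _ _ => mgf_nonneg
        · exact mgf_catMeasure_le (hp0 i) (hp1 i) (hla i)
    _ = _ := by
        simp only [Finset.prod_const, Finset.card_univ, Fintype.card_fin, ← exp_nat_mul, ← exp_sum]
        rw [← Finset.mul_sum, Finset.sum_add_distrib, ← Finset.mul_sum, ← Finset.mul_sum]

lemma multinomialFamily_tail_le {p : Fin Q → Fin K → ℝ} (hp0 : ∀ i k, 0 ≤ p i k)
    (hp1 : ∀ i, ∑ k, p i k = 1) (a : Fin Q → Fin K → ℝ) {l : ℝ} (hl : 0 ≤ l)
    (hla : ∀ i k, l * a i k ≤ 1) (t : ℝ) :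
    multinomialFamily (M := M) p
        {ω | t < ∑ i, ∑ k, a i k * ((mcount ω i k : ℝ) / M - p i k)} ≤
      ENNReal.ofReal (exp (M * (l ^ 2 * ∑ i, ∑ k, a i k ^ 2 * p i k - l * t))) := by
  have := isProbabilityMeasure_multinomialFamily (M := M) hp0 hp1
  set μ := ∑ i, ∑ k, a i k * p i k
  set V := ∑ i, ∑ k, a i k ^ 2 * p i k
  have hsub :
      {ω : Fin Q → Fin M → Fin K | t < ∑ i, ∑ k, a i k * ((mcount ω i k : ℝ) / M - p i k)} ⊆
        {ω | M * (t + μ) ≤ ∑ i, ∑ m, a i (ω i m)} := by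
    intro ω hω
    have hscaled := mul_le_mul_of_nonneg_left (le_of_lt hω) (Nat.cast_nonneg (α := ℝ) M)
    rw [mul_sum_sum_mcount_div_sub] at hscaled
    simp only [Set.mem_ofPred_eq]
    linarith
  calc multinomialFamily p _
      ≤ multinomialFamily p {ω | M * (t + μ) ≤ ∑ i, ∑ m, a i (ω i m)} := measure_mono hsub
    _ = ENNReal.ofReal
          ((multinomialFamily p).real {ω | M * (t + μ) ≤ ∑ i, ∑ m, a i (ω i m)}) :=
        (ENNReal.ofReal_toReal (measure_ne_top _ _)).symm
    _ ≤ ENNReal.ofReal (exp (-l * (M * (t + μ))) * exp (M * (l * μ + l ^ 2 * V))) := by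
        gcongr
        refine (measure_ge_le_exp_mul_mgf _ hl Integrable.of_finite).trans ?_
        gcongr
        exact mgf_multinomialFamily_le hp0 hp1 hla
    _ = ENNReal.ofReal (exp (M * (l ^ 2 * V - l * t))) := by
        rw [← exp_add]
        ring_nf

end Multinomial

lemma exists_chernoff_parameter {A V t : ℝ} (hA : 0 < A) (ht : 0 < t) :
    ∃ l, 0 ≤ l ∧ l * A ≤ 1 ∧ l ^ 2 * V - l * t ≤ -(t / (2 * A)) * min 1 (A * t / (2 * V)) := by
  rcases le_or_gt (A * t) (2 * V) with hsmall | hlarge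
  · have hV : 0 < V := by nlinarith [mul_pos hA ht]
    refine ⟨t / (2 * V), by positivity, ?_, ?_⟩
    · rw [div_mul_eq_mul_div, div_le_one (by positivity)]
      linarith
    · rw [min_eq_right ((div_le_one (by positivity)).2 hsmall)]
      apply le_of_eq
      field_simp
      ring
  · refine ⟨1 / A, by positivity, (one_div_mul_cancel hA.ne').le, ?_⟩
    have hmin : -(t / (2 * A)) ≤ -(t / (2 * A)) * min 1 (A * t / (2 * V)) := by
      nlinarith [min_le_left 1 (A * t / (2 * V)), div_pos ht (mul_pos two_pos hA)]
    have hgap : (1 / A) ^ 2 * V - 1 / A * t + t / (2 * A) = (2 * V - A * t) / (2 * A ^ 2) := by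
      field_simp
      ring
    have hgap_nonpos : (2 * V - A * t) / (2 * A ^ 2) ≤ 0 :=
      div_nonpos_of_nonpos_of_nonneg (by linarith) (by positivity)
    linarith

lemma le_amax {Q K : ℕ} (a : Fin (Q + 1) → Fin (K + 1) → ℝ) (i : Fin (Q + 1))
    (k : Fin (K + 1)) : a i k ≤ amax a :=
  Finset.le_sup' (fun ik : Fin (Q + 1) × Fin (K + 1) => a ik.1 ik.2) (Finset.mem_univ (i, k))

theorem multinomial_upper_tail_general {Q K M : ℕ}
    (p : Fin (Q + 1) → Fin (K + 1) → ℝ)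
    (hp0 : ∀ i k, 0 ≤ p i k) (hp1 : ∀ i, ∑ k, p i k = 1)
    (a : Fin (Q + 1) → Fin (K + 1) → ℝ) (hamax : 0 < amax a)
    (t : ℝ) (ht : 0 < t) :
    multinomialFamily (M := M) p
        {ω | t < ∑ i, ∑ k, a i k * ((mcount ω i k : ℝ) / M - p i k)} ≤
      ENNReal.ofReal (Real.exp (-(M * t / (2 * amax a)) *
        min 1 (amax a * t / (2 * ∑ i, ∑ k, (a i k) ^ 2 * p i k)))) := by
  obtain ⟨l, hl, hlA, hexponent⟩ :=
    exists_chernoff_parameter (V := ∑ i, ∑ k, (a i k) ^ 2 * p i k) hamax ht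
  have hla (i k) : l * a i k ≤ 1 := (mul_le_mul_of_nonneg_left (le_amax a i k) hl).trans hlA
  refine (multinomialFamily_tail_le hp0 hp1 a hl hla t).trans
    (ENNReal.ofReal_le_ofReal (exp_le_exp.2 ?_))
  calc (M : ℝ) * (l ^ 2 * ∑ i, ∑ k, a i k ^ 2 * p i k - l * t)
      ≤ M * (-(t / (2 * amax a)) * min 1 (amax a * t / (2 * ∑ i, ∑ k, (a i k) ^ 2 * p i k))) :=
        mul_le_mul_of_nonneg_left hexponent (Nat.cast_nonneg M)
    _ = _ := by ring

/-- one-sided concentration for nonnegative linear functionals of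
independent multinomial random vectors:
`P(Σ_{i,k} a_{i,k}(f_{i,k}/M − p_{i,k}) > t)
  ≤ exp(−(Mt/(2a_max)) · min{1, a_max t / (2 Σ_{i,k} a_{i,k}² p_{i,k})})`. -/
theorem multinomial_upper_tail {Q K M : ℕ} (hM : 0 < M)
    (p : Fin (Q + 1) → Fin (K + 1) → ℝ)
    (hp0 : ∀ i k, 0 ≤ p i k) (hp1 : ∀ i, ∑ k, p i k = 1)
    (a : Fin (Q + 1) → Fin (K + 1) → ℝ) (ha : ∀ i k, 0 ≤ a i k)
    (hap : ∀ i, ∑ k, a i k * p i k ≠ 0) (hamax : 0 < amax a)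
    (t : ℝ) (ht : 0 < t) :
    multinomialFamily (M := M) p
        {ω | t < ∑ i, ∑ k, a i k * ((mcount ω i k : ℝ) / M - p i k)} ≤
      ENNReal.ofReal (Real.exp (-(M * t / (2 * amax a)) *
        min 1 (amax a * t / (2 * ∑ i, ∑ k, (a i k) ^ 2 * p i k)))) :=
  multinomial_upper_tail_general p hp0 hp1 a hamax t ht
end
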